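/- arXiv:1212.6636 — 2 statements merged into one kernel-verified Lean document; each statement's English description precedes it below -/
import Mathlib

section
/- Let G be a splittable directed graph and C₁ ≠ C₂ distinct source-equivalence classes of inconsistent edges with C₁ ∈ coupled⁺(C₂). Then coupled⁺(C₁) ⊊ coupled⁺(C₂). -/
namespace CQA

variable {V : Type*}

/-- Directed reachability along edges in `A`. -/
def reach (A : Set (V × V)) (u v : V) : Prop :=
  Relation.ReflTransGen (fun x y => (x, y) ∈ A) u v

/-- `u` and `v` are in the same strongly connected component of the graph with edges `E`. -/
def sameSCC (E : Set (V × V)) (u v : V) : Prop := reach E u v ∧ reach E v u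

/-- There is an undirected path in `E` from `a` to `b` all of whose vertices
(including the endpoints) avoid the set `A`. -/
def ureach (E : Set (V × V)) (A : Set V) (a b : V) : Prop :=
  a ∉ A ∧ Relation.ReflTransGen (fun x y => ((x, y) ∈ E ∨ (y, x) ∈ E) ∧ y ∉ A) a b

/-- `u_R^{+,R}`: vertices reachable from the source of `R` in `G − {R}`. -/
def uplus (E : Set (V × V)) (R : V × V) : Set V := {v | reach (E \ {R}) R.1 v}

/-- `u^⊕`: vertices reachable from `u` using only consistent edges `Ec`. -/
def uoplus (Ec : Set (V × V)) (u : V) : Set V := {v | reach Ec u v}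

/-- `C` is a source-equivalence class of inconsistent edges `Ei`. -/
def IsClass (E Ei : Set (V × V)) (C : Set (V × V)) : Prop :=
  ∃ R ∈ Ei, C = {S ∈ Ei | sameSCC E R.1 S.1}

/-- `C^⊕ = ⋂_{R ∈ C} u_R^⊕`. -/
def Coplus (Ec : Set (V × V)) (C : Set (V × V)) : Set V :=
  {v | ∀ R ∈ C, v ∈ uoplus Ec R.1}

/-- `C⁺ = ⋂_{R ∈ C} u_R^{+,R}`. -/
def Cplus (E : Set (V × V)) (C : Set (V × V)) : Set V :=
  {v | ∀ R ∈ C, v ∈ uplus E R}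

/-- `C₁ ≤⊕ C₂` iff some `S ∈ C₂` has `u_S ∈ C₁^⊕`. -/
def leOplus (Ec : Set (V × V)) (C₁ C₂ : Set (V × V)) : Prop :=
  ∃ S ∈ C₂, S.1 ∈ Coplus Ec C₁

/-- The strict order `C₁ <⊕ C₂`. -/
def ltOplus (Ec : Set (V × V)) (C₁ C₂ : Set (V × V)) : Prop :=
  leOplus Ec C₁ C₂ ∧ C₁ ≠ C₂

/-- A sink: a maximal element of `<⊕` among source-equivalence classes. -/
def IsSink (E Ei Ec : Set (V × V)) (C : Set (V × V)) : Prop :=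
  IsClass E Ei C ∧ ∀ C', IsClass E Ei C' → ¬ ltOplus Ec C C'

/-- `C' ∈ coupled⊕(C)`. -/
def coupledOplusCl (E Ec : Set (V × V)) (C C' : Set (V × V)) : Prop :=
  C' = C ∨ ∃ R ∈ C, ∃ S ∈ C', ureach E (Coplus Ec C) R.2 S.1

/-- `C' ∈ coupled⁺(C)`. -/
def coupledPlusCl (E : Set (V × V)) (C C' : Set (V × V)) : Prop :=
  C' = C ∨ ∃ R ∈ C, ∃ S ∈ C', ureach E (Cplus E C) R.2 S.1

/-- `S ∈ coupled⁺(R)` for inconsistent edges `R, S`: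
either `S ∈ [R]`, or there is an undirected path `v_R ↔ u_S` avoiding `u_R^{+,R}`. -/
def coupledPlusEdge (E Ei : Set (V × V)) (R S : V × V) : Prop :=
  S ∈ Ei ∧ (sameSCC E R.1 S.1 ∨ ureach E (uplus E R) R.2 S.1)

/-- `G` is splittable: every coupled pair of inconsistent edges is source-equivalent. -/
def Splittable (E Ec : Set (V × V)) : Prop :=
  ∀ R ∈ E \ Ec, ∀ S ∈ E \ Ec,
    coupledPlusEdge E (E \ Ec) R S → coupledPlusEdge E (E \ Ec) S R → sameSCC E R.1 S.1

/-- `G` is f-closed: for every inconsistent edge `R`,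
`v_R^⊕ ∩ u_R^{+,R} ⊆ u_R^⊕`. -/
def FClosed (E Ec : Set (V × V)) : Prop :=
  ∀ R ∈ E \ Ec, ∀ v, v ∈ uoplus Ec R.2 → v ∈ uplus E R → v ∈ uoplus Ec R.1

end CQA

/-!
A class-level coupling witness can be carried by a single edge: a vertex outside `C⁺` lies
outside `u_X^{+,X}` for some `X ∈ C`, and is then reached from `v_X` inside `G − {X}` by a path
avoiding `u_X^{+,X}`. If `X ∈ C₂` is coupled in this way to `Y ∈ C₁`, splittability forbids any
path from `v_Y` avoiding `u_Y^{+,Y}` to enter `u_X^{+,X}`. So a witness for `C' ∈ coupled⁺(C₁)`,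
prefixed by the path `v_X ↔ u_Y` and the edge `Y`, is a witness for `C' ∈ coupled⁺(C₂)`; and
coupling in both directions would put the sources of `X` and `Y` in one strongly connected
component, so `C₂ ∉ coupled⁺(C₁)`.
-/

namespace CQA

variable {V : Type*} {E Ec : Set (V × V)} {A A' : Set V} {R X Y : V × V} {a b c u w z : V}

theorem reach.mono {B B' : Set (V × V)} (hB : B ⊆ B') (h : reach B a b) : reach B' a b :=
  Relation.ReflTransGen.mono (fun _ _ hxy => hB hxy) a b h

theorem sameSCC.symm (h : sameSCC E a b) : sameSCC E b a := ⟨h.2, h.1⟩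

theorem sameSCC.trans (h : sameSCC E a b) (h' : sameSCC E b c) : sameSCC E a c :=
  ⟨h.1.trans h'.1, h'.2.trans h.2⟩

namespace ureach

theorem notMem_right (h : ureach E A a b) : b ∉ A := by
  obtain ⟨ha, p⟩ := h
  induction p with
  | refl => exact ha
  | tail _ hxy => exact hxy.2

theorem tail (h : ureach E A a b) (e : (b, c) ∈ E ∨ (c, b) ∈ E) (hc : c ∉ A) :
    ureach E A a c :=
  ⟨h.1, h.2.tail ⟨e, hc⟩⟩

theorem trans (h : ureach E A a b) (h' : ureach E A b c) : ureach E A a c :=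
  ⟨h.1, h.2.trans h'.2⟩

theorem symm (h : ureach E A a b) : ureach E A b a := by
  obtain ⟨ha, p⟩ := h
  induction p with
  | refl => exact ⟨ha, .refl⟩
  | tail _ hxy ih => exact ⟨hxy.2, .head ⟨hxy.1.symm, ih.1⟩ ih.2⟩

theorem mono (h : ureach E A a b) (hA : A' ⊆ A) : ureach E A' a b :=
  ⟨fun ha => h.1 (hA ha),
    Relation.ReflTransGen.mono (fun _ _ hxy => ⟨hxy.1, fun hy => hxy.2 (hA hy)⟩) _ _ h.2⟩

theorem of_forall_notMem (h : ureach E A a b) (hA : ∀ x, ureach E A a x → x ∉ A') :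
    ureach E A' a b := by
  obtain ⟨ha, p⟩ := h
  refine ⟨hA a ⟨ha, .refl⟩, ?_⟩
  induction p with
  | refl => exact .refl
  | tail p hxy ih => exact ih.tail ⟨hxy.1, hA _ ⟨ha, p.tail hxy⟩⟩

end ureach

theorem exists_mem_or_ureach {B : Set (V × V)} (hB : B ⊆ E) (h : reach B a b) :
    (∃ c ∈ A, reach B a c ∧ reach B c b) ∨ ureach E A a b := by
  induction h with
  | refl =>
    by_cases ha : a ∈ A
    exacts [.inl ⟨a, ha, .refl, .refl⟩, .inr ⟨ha, .refl⟩]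
  | @tail x y hax hxy ih =>
    by_cases hy : y ∈ A
    · exact .inl ⟨y, hy, hax.tail hxy, .refl⟩
    · exact ih.imp (fun ⟨c, hc, hac, hcx⟩ => ⟨c, hc, hac, hcx.tail hxy⟩)
        (fun h => h.tail (.inl (hB hxy)) hy)

theorem ureach_of_reach {B : Set (V × V)} (hB : B ⊆ E)
    (hA : ∀ x y, x ∈ A → (x, y) ∈ B → y ∈ A) (h : reach B a b) (hb : b ∉ A) : ureach E A a b := by
  induction h using Relation.ReflTransGen.head_induction_on with
  | refl => exact ⟨hb, .refl⟩
  | head hac _ ih => exact ⟨fun ha => ih.1 (hA _ _ ha hac), .head ⟨.inl (hB hac), ih.1⟩ ih.2⟩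

theorem reach_or_reach_fst (R : V × V) (h : reach E a b) :
    reach (E \ {R}) a b ∨ reach E a R.1 := by
  induction h with
  | refl => exact .inl .refl
  | @tail x y _ hxy ih =>
    refine ih.elim (fun ih => ?_) .inr
    by_cases hR : (x, y) = R
    · subst hR
      exact .inr (reach.mono Set.sdiff_subset ih)
    · exact .inl (ih.tail ⟨hxy, hR⟩)

theorem reach_of_mem_uplus (h : a ∈ uplus E R) : reach E R.1 a :=
  reach.mono Set.sdiff_subset h

theorem mem_uplus_of_reach (ha : a ∈ uplus E R) (h : reach (E \ {R}) a b) : b ∈ uplus E R :=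
  Relation.ReflTransGen.trans ha h

theorem reach_fst_of_mem_uplus (hc : c ∈ uplus E R) (h : reach E c z) (hz : z ∉ uplus E R) :
    reach E c R.1 :=
  (reach_or_reach_fst R h).resolve_left fun h' => hz (mem_uplus_of_reach hc h')

theorem mem_uplus_or_reach_snd (hc : c ∈ uplus E R) (h : reach E c b) :
    b ∈ uplus E R ∨ reach (E \ {R}) R.2 b := by
  induction h with
  | refl => exact .inl hc
  | @tail x y _ hxy ih =>
    by_cases hR : (x, y) = R
    · subst hR
      exact .inr .refl
    · exact ih.imp (fun h => mem_uplus_of_reach h (.single ⟨hxy, hR⟩)) (·.tail ⟨hxy, hR⟩)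

theorem ureach_uplus_snd (hc : c ∈ uplus E R) (h : reach E c b) (hb : b ∉ uplus E R) :
    ureach E (uplus E R) R.2 b :=
  ureach_of_reach Set.sdiff_subset (fun _ _ hx hxy => mem_uplus_of_reach hx (.single hxy))
    ((mem_uplus_or_reach_snd hc h).resolve_left hb) hb

theorem ureach_uplus_snd_of_ureach (hw : ureach E (uplus E R) R.2 a) (h : reach E a b)
    (hb : b ∉ uplus E R) : ureach E (uplus E R) R.2 b := by
  rcases exists_mem_or_ureach subset_rfl h with ⟨c, hc, -, hcb⟩ | hab
  · exact ureach_uplus_snd hc hcb hb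
  · exact hw.trans hab

theorem ureach_uplus_snd_of_sameSCC (hw : ureach E (uplus E R) R.2 a) (hab : sameSCC E a b)
    (hn : ¬ sameSCC E R.1 b) : ureach E (uplus E R) R.2 b :=
  ureach_uplus_snd_of_ureach hw hab.1 fun hb =>
    hn ⟨reach_of_mem_uplus hb, reach_fst_of_mem_uplus hb hab.2 hw.notMem_right⟩

section Cplus

variable {C : Set (V × V)} (hC : ∀ R ∈ C, ∀ S ∈ C, reach E R.1 S.1)
include hC

theorem exists_ureach_uplus_of_notMem_Cplus (hR : R ∈ C) (hw : reach E R.1 w)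
    (hwC : w ∉ Cplus E C) : ∃ R' ∈ C, ureach E (uplus E R') R'.2 w := by
  obtain ⟨R', hR', hwR'⟩ : ∃ R' ∈ C, w ∉ uplus E R' := by simpa [Cplus] using hwC
  exact ⟨R', hR', ureach_uplus_snd .refl ((hC R' hR' R hR).trans hw) hwR'⟩

theorem exists_ureach_uplus_of_ureach_Cplus (hCE : C ⊆ E) (hR : R ∈ C)
    (h : ureach E (Cplus E C) R.2 u) : ∃ R' ∈ C, ureach E (uplus E R') R'.2 u := by
  obtain ⟨hR₂, p⟩ := h
  induction p with
  | refl => exact exists_ureach_uplus_of_notMem_Cplus hC hR (.single (hCE hR)) hR₂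
  | @tail x y _ hxy ih =>
    obtain ⟨R', hR', hx⟩ := ih
    by_cases hy : y ∈ uplus E R'
    · exact exists_ureach_uplus_of_notMem_Cplus hC hR' (reach_of_mem_uplus hy) hxy.2
    · exact ⟨R', hR', hx.tail hxy.1 hy⟩

end Cplus

namespace IsClass

variable {Ei C D : Set (V × V)} {S : V × V}

theorem subset (h : IsClass E Ei C) : C ⊆ Ei := by
  obtain ⟨_, _, rfl⟩ := h
  exact fun _ hS => hS.1

theorem sameSCC_of_mem (h : IsClass E Ei C) (hR : R ∈ C) (hS : S ∈ C) :
    sameSCC E R.1 S.1 := by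
  obtain ⟨_, _, rfl⟩ := h
  exact hR.2.symm.trans hS.2

theorem eq_of_sameSCC (hC : IsClass E Ei C) (hD : IsClass E Ei D) (hR : R ∈ C) (hS : S ∈ D)
    (hRS : sameSCC E R.1 S.1) : C = D := by
  obtain ⟨R₀, _, rfl⟩ := hC
  obtain ⟨S₀, _, rfl⟩ := hD
  have h₀ : sameSCC E R₀.1 S₀.1 := (hR.2.trans hRS).trans hS.2.symm
  ext T
  exact and_congr_right fun _ => ⟨h₀.symm.trans, h₀.trans⟩

theorem exists_ureach_uplus (hC : IsClass E (E \ Ec) C) (hR : R ∈ C)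
    (h : ureach E (Cplus E C) R.2 u) : ∃ R' ∈ C, ureach E (uplus E R') R'.2 u :=
  exists_ureach_uplus_of_ureach_Cplus (fun _ hR _ hS => (hC.sameSCC_of_mem hR hS).1)
    (fun _ hR => (hC.subset hR).1) hR h

theorem exists_forall_ureach_uplus_fst (hC : IsClass E (E \ Ec) C)
    (hD : IsClass E (E \ Ec) D) (hne : C ≠ D) (h : coupledPlusCl E C D) :
    ∃ X ∈ C, ∀ Y ∈ D, ureach E (uplus E X) X.2 Y.1 := by
  obtain ⟨R, hR, S, hS, hRS⟩ := h.resolve_left hne.symm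
  obtain ⟨X, hX, hXS⟩ := hC.exists_ureach_uplus hR hRS
  exact ⟨X, hX, fun Y hY => ureach_uplus_snd_of_sameSCC hXS (hD.sameSCC_of_mem hS hY)
    fun hXY => hne (hC.eq_of_sameSCC hD hX hY hXY)⟩

end IsClass

namespace Splittable

variable (hsp : Splittable E Ec) (hX : X ∈ E \ Ec) (hY : Y ∈ E \ Ec)
include hsp hX hY

theorem sameSCC_of_ureach (hXY : ureach E (uplus E X) X.2 Y.1)
    (hYX : ureach E (uplus E Y) Y.2 X.1) : sameSCC E X.1 Y.1 :=
  hsp X hX Y hY ⟨hY, .inr hXY⟩ ⟨hX, .inr hYX⟩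

theorem notMem_uplus_of_ureach (hXY : ureach E (uplus E X) X.2 Y.1)
    (hn : ¬ sameSCC E X.1 Y.1) (hz : ureach E (uplus E Y) Y.2 z) : z ∉ uplus E X := by
  intro hzX
  rcases exists_mem_or_ureach (A := uplus E Y) Set.sdiff_subset hzX with
    ⟨c, hcY, hcX, hcz⟩ | hXz
  · have hcY₁ : reach E c Y.1 :=
      reach_fst_of_mem_uplus hcY (hcz.mono Set.sdiff_subset) hz.notMem_right
    have hcX₁ : reach E c X.1 := reach_fst_of_mem_uplus hcX hcY₁ hXY.notMem_right
    exact hn ⟨(reach_of_mem_uplus hcX).trans hcY₁, (reach_of_mem_uplus hcY).trans hcX₁⟩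
  · exact hn (hsp.sameSCC_of_ureach hX hY hXY (hz.trans hXz.symm))

end Splittable

variable {C₁ C₂ C' : Set (V × V)}

theorem Splittable.coupledPlusCl_trans (hsp : Splittable E Ec) (h₁ : IsClass E (E \ Ec) C₁)
    (h₂ : IsClass E (E \ Ec) C₂) (h : coupledPlusCl E C₂ C₁) (h' : coupledPlusCl E C₁ C') :
    coupledPlusCl E C₂ C' := by
  rcases eq_or_ne C₁ C₂ with rfl | hne
  · exact h'
  rcases h' with rfl | ⟨R, hR, S, hS, hRS⟩
  · exact h
  obtain ⟨X, hX, hXC₁⟩ := h₂.exists_forall_ureach_uplus_fst h₁ hne.symm h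
  obtain ⟨Y, hY, hYS⟩ := h₁.exists_ureach_uplus hR hRS
  have hXY := hXC₁ Y hY
  have hn : ¬ sameSCC E X.1 Y.1 := fun hs => hne (h₂.eq_of_sameSCC h₁ hX hY hs).symm
  have hYS' : ureach E (uplus E X) Y.2 S.1 := hYS.of_forall_notMem fun _ hz =>
    hsp.notMem_uplus_of_ureach (h₂.subset hX) (h₁.subset hY) hXY hn hz
  have hXS : ureach E (uplus E X) X.2 S.1 :=
    (hXY.tail (.inl (h₁.subset hY).1) hYS'.1).trans hYS'
  exact .inr ⟨X, hX, S, hS, hXS.mono fun _ hv => hv X hX⟩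

theorem Splittable.not_coupledPlusCl_of_coupledPlusCl (hsp : Splittable E Ec)
    (h₁ : IsClass E (E \ Ec) C₁) (h₂ : IsClass E (E \ Ec) C₂) (hne : C₁ ≠ C₂)
    (h : coupledPlusCl E C₂ C₁) : ¬ coupledPlusCl E C₁ C₂ := fun h' => by
  obtain ⟨X, hX, hXC₁⟩ := h₂.exists_forall_ureach_uplus_fst h₁ hne.symm h
  obtain ⟨Y, hY, hYC₂⟩ := h₁.exists_forall_ureach_uplus_fst h₂ hne h'
  exact hne <| h₁.eq_of_sameSCC h₂ hY hX <|
    hsp.sameSCC_of_ureach (h₁.subset hY) (h₂.subset hX) (hYC₂ X hX) (hXC₁ Y hY)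

end CQA

open CQA in
theorem stmt_11_general {V : Type*} (E Ec : Set (V × V))
    (hsp : Splittable E Ec)
    (C₁ C₂ : Set (V × V)) (h₁ : IsClass E (E \ Ec) C₁) (h₂ : IsClass E (E \ Ec) C₂)
    (hne : C₁ ≠ C₂) (h : coupledPlusCl E C₂ C₁) :
    {C' | IsClass E (E \ Ec) C' ∧ coupledPlusCl E C₁ C'} ⊂
      {C' | IsClass E (E \ Ec) C' ∧ coupledPlusCl E C₂ C'} :=
  ⟨fun _ hC' => ⟨hC'.1, hsp.coupledPlusCl_trans h₁ h₂ h hC'.2⟩,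
    fun hsub => hsp.not_coupledPlusCl_of_coupledPlusCl h₁ h₂ hne h (hsub ⟨h₂, .inl rfl⟩).2⟩

open CQA in
/-- in a splittable graph, if C₁ ∈ coupled⁺(C₂) and C₁ ≠ C₂ then
coupled⁺(C₁) ⊊ coupled⁺(C₂). -/
theorem stmt_11 {V : Type*} [Fintype V] (E Ec : Set (V × V)) (hEc : Ec ⊆ E)
    (hsp : Splittable E Ec)
    (C₁ C₂ : Set (V × V)) (h₁ : IsClass E (E \ Ec) C₁) (h₂ : IsClass E (E \ Ec) C₂)
    (hne : C₁ ≠ C₂) (h : coupledPlusCl E C₂ C₁) :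
    {C' | IsClass E (E \ Ec) C' ∧ coupledPlusCl E C₁ C'} ⊂
      {C' | IsClass E (E \ Ec) C' ∧ coupledPlusCl E C₂ C'} :=
  stmt_11_general E Ec hsp C₁ C₂ h₁ h₂ hne h
end

section
/- Let G be a splittable, f-closed directed graph with at least one inconsistent edge, and let C^sep be a sink of the strict partial order <⊕ on source-equivalence classes that minimizes |coupled⊕(C)| among sinks. Then C^sep is a separator: for every class C' ≠ C^sep with C' ∈ coupled⊕(C^sep), we have C' <⊕ C^sep. -/
namespace CQA

variable {V : Type*} {E Ec : Set (V × V)}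

/-! ### Infrastructure -/

variable {E Ec : Set (V × V)}

theorem reach_refl {A : Set (V × V)} {u : V} : reach A u u := Relation.ReflTransGen.refl

theorem reach_trans {A : Set (V × V)} {u v w : V} (h1 : reach A u v) (h2 : reach A v w) :
    reach A u w := Relation.ReflTransGen.trans h1 h2

theorem reach_single {A : Set (V × V)} {u v : V} (h : (u, v) ∈ A) : reach A u v :=
  Relation.ReflTransGen.single h

theorem reach_tail {A : Set (V × V)} {u v w : V} (h : reach A u v) (e : (v, w) ∈ A) :
    reach A u w := Relation.ReflTransGen.tail h e

theorem reach_head {A : Set (V × V)} {u v w : V} (e : (u, v) ∈ A) (h : reach A v w) :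
    reach A u w := Relation.ReflTransGen.head e h

theorem reach_mono {A B : Set (V × V)} (hAB : A ⊆ B) {u v : V} (h : reach A u v) :
    reach B u v := by
  induction h with
  | refl => exact reach_refl
  | tail _ he ih => exact reach_tail ih (hAB he)

theorem sameSCC_refl {u : V} : sameSCC E u u := ⟨reach_refl, reach_refl⟩

theorem sameSCC_symm {u v : V} (h : sameSCC E u v) : sameSCC E v u := ⟨h.2, h.1⟩

theorem sameSCC_trans {u v w : V} (h1 : sameSCC E u v) (h2 : sameSCC E v w) :
    sameSCC E u w := ⟨reach_trans h1.1 h2.1, reach_trans h2.2 h1.2⟩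

theorem Ec_subset_sans (hEc : Ec ⊆ E) {R : V × V} (hR : R ∉ Ec) : Ec ⊆ E \ {R} := by
  intro e he
  exact ⟨hEc he, by simp only [Set.mem_singleton_iff]; rintro rfl; exact hR he⟩

theorem uoplus_subset_uplus (hEc : Ec ⊆ E) {R : V × V} (hR : R ∉ Ec) {x : V}
    (h : x ∈ uoplus Ec R.1) : x ∈ uplus E R :=
  reach_mono (Ec_subset_sans hEc hR) h

theorem coplus_subset_cplus (hEc : Ec ⊆ E) {C : Set (V × V)} (hC : C ⊆ E \ Ec) :
    Coplus Ec C ⊆ Cplus E C := by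
  intro x hx R hR
  exact uoplus_subset_uplus hEc (hC hR).2 (hx R hR)

theorem coplus_closed {C : Set (V × V)} {x y : V} (hx : x ∈ Coplus Ec C)
    (hxy : reach Ec x y) : y ∈ Coplus Ec C := by
  intro R hR
  exact reach_trans (hx R hR) hxy

theorem coplus_closed_edge {C : Set (V × V)} {x y : V} (hx : x ∈ Coplus Ec C)
    (hxy : (x, y) ∈ Ec) : y ∈ Coplus Ec C :=
  coplus_closed hx (reach_single hxy)

theorem uplus_refl {R : V × V} : R.1 ∈ uplus E R := reach_refl

theorem uplus_closed {R : V × V} {x y : V} (hx : x ∈ uplus E R)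
    (hxy : (x, y) ∈ E) (hne : (x, y) ≠ R) : y ∈ uplus E R :=
  reach_tail hx ⟨hxy, by simpa using hne⟩

theorem reach_of_uplus {R : V × V} {x : V} (hx : x ∈ uplus E R) : reach E R.1 x :=
  reach_mono Set.diff_subset hx

/-! ### ureach lemmas -/

theorem ureach_notmem_left {A : Set V} {a b : V} (h : ureach E A a b) : a ∉ A := h.1

theorem ureach_notmem_right {A : Set V} {a b : V} (h : ureach E A a b) : b ∉ A := by
  obtain ⟨ha, hw⟩ := h
  induction hw with
  | refl => exact ha
  | tail _ hs _ => exact hs.2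

theorem ureach_refl {A : Set V} {a : V} (ha : a ∉ A) : ureach E A a a :=
  ⟨ha, Relation.ReflTransGen.refl⟩

theorem ureach_trans {A : Set V} {a b c : V} (h1 : ureach E A a b) (h2 : ureach E A b c) :
    ureach E A a c := ⟨h1.1, Relation.ReflTransGen.trans h1.2 h2.2⟩

theorem ureach_tail {A : Set V} {a b c : V} (h : ureach E A a b)
    (he : (b, c) ∈ E ∨ (c, b) ∈ E) (hc : c ∉ A) : ureach E A a c :=
  ⟨h.1, Relation.ReflTransGen.tail h.2 ⟨he, hc⟩⟩

theorem ureach_head {A : Set V} {a b c : V} (ha : a ∉ A)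
    (he : (a, b) ∈ E ∨ (b, a) ∈ E) (h : ureach E A b c) : ureach E A a c :=
  ⟨ha, Relation.ReflTransGen.head ⟨he, ureach_notmem_left h⟩ h.2⟩

/-! ### Class lemmas -/

theorem class_subset_Ei {Ei C : Set (V × V)} (hC : IsClass E Ei C) : C ⊆ Ei := by
  obtain ⟨R, _, rfl⟩ := hC
  exact fun S hS => hS.1

theorem class_nonempty {Ei C : Set (V × V)} (hC : IsClass E Ei C) : ∃ R, R ∈ C := by
  obtain ⟨R, hR, rfl⟩ := hC
  exact ⟨R, hR, sameSCC_refl⟩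

theorem class_scc {Ei C : Set (V × V)} (hC : IsClass E Ei C) {S T : V × V}
    (hS : S ∈ C) (hT : T ∈ C) : sameSCC E S.1 T.1 := by
  obtain ⟨R, _, rfl⟩ := hC
  exact sameSCC_trans (sameSCC_symm hS.2) hT.2

theorem mem_class_of_scc {Ei C : Set (V × V)} (hC : IsClass E Ei C) {S T : V × V}
    (hS : S ∈ C) (hT : T ∈ Ei) (h : sameSCC E S.1 T.1) : T ∈ C := by
  obtain ⟨R, _, rfl⟩ := hC
  exact ⟨hT, sameSCC_trans hS.2 h⟩

theorem class_eq_of_scc {Ei C D : Set (V × V)} (hC : IsClass E Ei C) (hD : IsClass E Ei D)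
    {S T : V × V} (hS : S ∈ C) (hT : T ∈ D) (h : sameSCC E S.1 T.1) : C = D := by
  obtain ⟨R, hR, rfl⟩ := hC
  obtain ⟨R', hR', rfl⟩ := hD
  ext Z
  constructor
  · intro hZ
    exact ⟨hZ.1, sameSCC_trans hT.2 (sameSCC_trans (sameSCC_symm h)
      (sameSCC_trans (sameSCC_symm hS.2) hZ.2))⟩
  · intro hZ
    exact ⟨hZ.1, sameSCC_trans hS.2 (sameSCC_trans h
      (sameSCC_trans (sameSCC_symm hT.2) hZ.2))⟩

theorem classOf_isClass {Ei : Set (V × V)} {S : V × V} (hS : S ∈ Ei) :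
    IsClass E Ei {T ∈ Ei | sameSCC E S.1 T.1} := ⟨S, hS, rfl⟩

theorem mem_classOf_self {Ei : Set (V × V)} {S : V × V} (hS : S ∈ Ei) :
    S ∈ {T ∈ Ei | sameSCC E S.1 T.1} := ⟨hS, sameSCC_refl⟩

/-! ### leOplus lemmas -/

theorem coplus_anti {C₁ C₂ : Set (V × V)} (h : leOplus Ec C₁ C₂) :
    Coplus Ec C₂ ⊆ Coplus Ec C₁ := by
  obtain ⟨T, hT, hT1⟩ := h
  intro x hx R hR
  exact reach_trans (hT1 R hR) (hx T hT)

theorem leOplus_trans {C₁ C₂ C₃ : Set (V × V)} (h1 : leOplus Ec C₁ C₂)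
    (h2 : leOplus Ec C₂ C₃) : leOplus Ec C₁ C₃ := by
  obtain ⟨S, hS, hS1⟩ := h2
  exact ⟨S, hS, coplus_anti h1 hS1⟩

theorem leOplus_antisymm {Ei C D : Set (V × V)} (hC : IsClass E Ei C) (hD : IsClass E Ei D)
    (hEc : Ec ⊆ E) (h1 : leOplus Ec C D) (h2 : leOplus Ec D C) : C = D := by
  obtain ⟨S, hS, hS1⟩ := h1
  obtain ⟨T, hT, hT1⟩ := h2
  have hTS : reach Ec T.1 S.1 := hS1 T hT
  have hST : reach Ec S.1 T.1 := hT1 S hS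
  exact (class_eq_of_scc hD hC hS hT
    ⟨reach_mono hEc hST, reach_mono hEc hTS⟩).symm

theorem classes_finite [Finite V] {Ei : Set (V × V)} : {C : Set (V × V) | IsClass E Ei C}.Finite := by
  apply Set.Finite.subset (Set.finite_range (fun r : V => {S ∈ Ei | sameSCC E r S.1}))
  rintro C ⟨R, _, rfl⟩
  exact ⟨R.1, rfl⟩

theorem exists_sink [Finite V] (hEc : Ec ⊆ E) {C₁ : Set (V × V)}
    (hC1 : IsClass E (E \ Ec) C₁) :
    ∃ C₂, IsSink E (E \ Ec) Ec C₂ ∧ (C₂ = C₁ ∨ leOplus Ec C₁ C₂) := by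
  set reachset : Set (V × V) → Set (Set (V × V)) :=
    fun X => {C' | IsClass E (E \ Ec) C' ∧ (C' = X ∨ leOplus Ec X C')} with hreachset
  have hfin : ∀ X, (reachset X).Finite := fun X =>
    Set.Finite.subset classes_finite (fun C' hC' => hC'.1)
  obtain ⟨n, hn⟩ : ∃ n, (reachset C₁).ncard = n := ⟨_, rfl⟩
  induction n using Nat.strong_induction_on generalizing C₁ with
  | _ n ih =>
    by_cases hs : ∀ C', IsClass E (E \ Ec) C' → ¬ ltOplus Ec C₁ C'
    · exact ⟨C₁, ⟨hC1, hs⟩, Or.inl rfl⟩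
    · push_neg at hs
      obtain ⟨C'', hC''cls, hlt⟩ := hs
      have hsub : reachset C'' ⊆ reachset C₁ := by
        rintro X ⟨hXcls, hX⟩
        refine ⟨hXcls, Or.inr ?_⟩
        rcases hX with rfl | hle
        · exact hlt.1
        · exact leOplus_trans hlt.1 hle
      have hC1mem : C₁ ∈ reachset C₁ := ⟨hC1, Or.inl rfl⟩
      have hC1nmem : C₁ ∉ reachset C'' := by
        rintro ⟨_, h⟩
        rcases h with rfl | hle
        · exact hlt.2 rfl
        · exact hlt.2 (leOplus_antisymm hC1 hC''cls hEc hlt.1 hle)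
      have hlt' : (reachset C'').ncard < (reachset C₁).ncard := by
        apply Set.ncard_lt_ncard _ (hfin C₁)
        exact (Set.ssubset_iff_of_subset hsub).2 ⟨C₁, hC1mem, hC1nmem⟩
      obtain ⟨C₂, hC₂sink, hC₂⟩ := ih _ (hn ▸ hlt') hC''cls rfl
      refine ⟨C₂, hC₂sink, Or.inr ?_⟩
      rcases hC₂ with rfl | hle
      · exact hlt.1
      · exact leOplus_trans hlt.1 hle


/-! ### Boundary lemmas -/

theorem uplus_boundary {S : V × V} {x y : V} (hxy : (x, y) ∈ E)
    (hx : x ∈ uplus E S) (hy : y ∉ uplus E S) : (x, y) = S := by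
  by_contra hne
  exact hy (uplus_closed hx hxy hne)

theorem sink_boundary (hsink : IsSink E (E \ Ec) Ec C) {x y : V} (hxy : (x, y) ∈ E)
    (hx : x ∈ Coplus Ec C) (hy : y ∉ Coplus Ec C) : (x, y) ∈ C := by
  by_cases hc : (x, y) ∈ Ec
  · exact absurd (coplus_closed_edge hx hc) hy
  · have hEi : (x, y) ∈ E \ Ec := ⟨hxy, hc⟩
    have hcls : IsClass E (E \ Ec) {T ∈ E \ Ec | sameSCC E x T.1} := ⟨(x, y), hEi, rfl⟩
    have hle : leOplus Ec C {T ∈ E \ Ec | sameSCC E x T.1} :=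
      ⟨(x, y), ⟨hEi, sameSCC_refl⟩, hx⟩
    have hns := hsink.2 _ hcls
    rw [ltOplus] at hns
    push_neg at hns
    have heq := hns hle
    rw [heq]
    exact (⟨hEi, sameSCC_refl⟩ : (x,y) ∈ {T ∈ E \ Ec | sameSCC E x T.1})

/-! ### EXIT and extension lemmas -/

theorem exit_claim {S : V × V} {t : V} (ht : t ∉ uplus E S) :
    ∀ w, reach E w t →
      ureach E (uplus E S) S.2 t ∨ (w ∉ uplus E S ∧ ureach E (uplus E S) w t) := by
  intro w hw
  induction hw using Relation.ReflTransGen.head_induction_on with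
  | refl => exact Or.inr ⟨ht, ureach_refl ht⟩
  | head hstep hrest ih =>
    rename_i a c
    rcases ih with h | ⟨hc, hu⟩
    · exact Or.inl h
    · by_cases ha : a ∈ uplus E S
      · have heq := uplus_boundary hstep ha hc
        subst heq
        exact Or.inl hu
      · exact Or.inr ⟨ha, ureach_head ha (Or.inl hstep) hu⟩

theorem exit {S : V × V} {w t : V} (hw : w ∈ uplus E S) (hr : reach E w t)
    (ht : t ∉ uplus E S) : ureach E (uplus E S) S.2 t := by
  rcases exit_claim ht w hr with h | ⟨hw', _⟩
  · exact h
  · exact absurd hw hw'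

theorem uextend {S : V × V} {a t w : V} (h : ureach E (uplus E S) a t)
    (hr : reach E t w) (hw : w ∉ uplus E S) : ureach E (uplus E S) a w ∨
      ureach E (uplus E S) S.2 w := by
  rcases exit_claim hw t hr with h' | ⟨_, hu⟩
  · exact Or.inr h'
  · exact Or.inl (ureach_trans h hu)

theorem uextend' {S : V × V} {t w : V} (h : ureach E (uplus E S) S.2 t)
    (hr : reach E t w) (hw : w ∉ uplus E S) : ureach E (uplus E S) S.2 w := by
  rcases uextend h hr hw with h' | h' <;> exact h'

/-! ### Clean consistent paths -/

theorem cons_clean {M : Set V} (hcl : ∀ x y, (x, y) ∈ Ec → x ∈ M → y ∈ M)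
    (hEc : Ec ⊆ E) {a b : V} (hr : reach Ec a b) (hb : b ∉ M) :
    ureach E M a b := by
  induction hr using Relation.ReflTransGen.head_induction_on with
  | refl => exact ureach_refl hb
  | head hstep hrest ih =>
    rename_i x c
    have hc : c ∉ M := ureach_notmem_left ih
    have hx : x ∉ M := fun hx => hc (hcl x c hstep hx)
    exact ureach_head hx (Or.inl (hEc hstep)) ih

theorem rev_cons {M : Set V} (hcl : ∀ x y, (x, y) ∈ Ec → x ∈ M → y ∈ M)
    (hEc : Ec ⊆ E) {a b : V} (hr : reach Ec a b) (hb : b ∉ M) :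
    ureach E M b a := by
  induction hr using Relation.ReflTransGen.head_induction_on with
  | refl => exact ureach_refl hb
  | head hstep hrest ih =>
    rename_i x c
    have hc : c ∉ M := ureach_notmem_right ih
    have hx : x ∉ M := fun hx => hc (hcl x c hstep hx)
    exact ureach_tail ih (Or.inr (hEc hstep)) hx

theorem uplus_Ec_closed (hEc : Ec ⊆ E) {S : V × V} (hS : S ∉ Ec) :
    ∀ x y, (x, y) ∈ Ec → x ∈ uplus E S → y ∈ uplus E S := by
  intro x y hxy hx
  exact uplus_closed hx (hEc hxy) (fun h => hS (h ▸ hxy))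

theorem coplus_Ec_closed {C : Set (V × V)} :
    ∀ x y, (x, y) ∈ Ec → x ∈ Coplus Ec C → y ∈ Coplus Ec C :=
  fun _ _ hxy hx => coplus_closed_edge hx hxy

/-! ### Reverse walk with escape (bridge) -/

theorem revb {E' : Set (V × V)} (hE' : E' ⊆ E) {S : V × V} {a b : V}
    (hr : reach E' a b) (hb : b ∉ uplus E S) :
    ureach E (uplus E S) b a ∨ reach E' a S.1 := by
  induction hr using Relation.ReflTransGen.head_induction_on with
  | refl => exact Or.inl (ureach_refl hb)
  | head hstep hrest ih =>
    rename_i x c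
    rcases ih with hu | hreach
    · have hc : c ∉ uplus E S := ureach_notmem_right hu
      by_cases hx : x ∈ uplus E S
      · have heq := uplus_boundary (hE' hstep) hx hc
        subst heq
        exact Or.inr reach_refl
      · exact Or.inl (ureach_tail hu (Or.inr (hE' hstep)) hx)
    · exact Or.inr (reach_head hstep hreach)

/-! ### Directed extension with restarts at sink-class edges -/

theorem across_claim (hsink : IsSink E (E \ Ec) Ec C) {q : V} (hq : q ∉ Coplus Ec C) :
    ∀ p, reach E p q →
      (∃ e ∈ C, ureach E (Coplus Ec C) e.2 q) ∨
        (p ∉ Coplus Ec C ∧ ureach E (Coplus Ec C) p q) := by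
  intro p hp
  induction hp using Relation.ReflTransGen.head_induction_on with
  | refl => exact Or.inr ⟨hq, ureach_refl hq⟩
  | head hstep hrest ih =>
    rename_i x c
    rcases ih with h | ⟨hc, hu⟩
    · exact Or.inl h
    · by_cases hx : x ∈ Coplus Ec C
      · exact Or.inl ⟨(x, c), sink_boundary hsink hstep hx hc, hu⟩
      · exact Or.inr ⟨hx, ureach_head hx (Or.inl hstep) hu⟩

theorem dirext (hsink : IsSink E (E \ Ec) Ec C) {t w : V}
    (h : ∃ e ∈ C, ureach E (Coplus Ec C) e.2 t) (hr : reach E t w)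
    (hw : w ∉ Coplus Ec C) : ∃ e ∈ C, ureach E (Coplus Ec C) e.2 w := by
  rcases across_claim hsink hw t hr with h' | ⟨_, hu⟩
  · exact h'
  · obtain ⟨e, he, hwalk⟩ := h
    exact ⟨e, he, ureach_trans hwalk hu⟩

/-! ### Avoiding an edge or passing through its source -/

theorem reach_avoid {e : V × V} {a b : V} (h : reach E a b) :
    reach (E \ {e}) a b ∨ reach E a e.1 := by
  induction h using Relation.ReflTransGen.head_induction_on with
  | refl => exact Or.inl reach_refl
  | head hstep hrest ih =>
    rename_i x c
    by_cases hxc : (x, c) = e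
    · subst hxc
      exact Or.inr reach_refl
    · rcases ih with h' | h'
      · exact Or.inl (reach_head ⟨hstep, by simpa using hxc⟩ h')
      · exact Or.inr (reach_head hstep h')

/-! ### Propagation lemma (PROP) -/

theorem prop_aux (hf : FClosed E Ec) {C : Set (V × V)} (hcls : IsClass E (E \ Ec) C)
    {z : V} (hz : z ∈ Cplus E C) {b : V} (hbC : ∃ T ∈ C, T.1 = b)
    (hzb : z ∈ uoplus Ec b) :
    ∀ a, reach E a b → reach E b a → z ∈ uoplus Ec a := by
  intro a hab
  induction hab using Relation.ReflTransGen.head_induction_on with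
  | refl => exact fun _ => hzb
  | head hstep hrest ih =>
    rename_i x c
    intro hbx
    have hbc : reach E b c := reach_trans hbx (reach_single hstep)
    have hzc : z ∈ uoplus Ec c := ih hbc
    by_cases hcons : (x, c) ∈ Ec
    · exact reach_trans (reach_single hcons) hzc
    · -- inconsistent edge (x,c); it belongs to C
      have hJEi : (x, c) ∈ E \ Ec := ⟨hstep, hcons⟩
      obtain ⟨T, hT, rfl⟩ := hbC
      have hscc : sameSCC E T.1 x :=
        ⟨hbx, Relation.ReflTransGen.head hstep hrest⟩
      have hJC : (x, c) ∈ C := mem_class_of_scc hcls hT hJEi hscc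
      have hzJ : z ∈ uplus E (x, c) := hz (x, c) hJC
      exact hf (x, c) hJEi z hzc hzJ

theorem prop_lemma (hf : FClosed E Ec) {C : Set (V × V)} (hcls : IsClass E (E \ Ec) C)
    {z : V} (hz : z ∈ Cplus E C) {S : V × V} (hS : S ∈ C)
    (hcone : z ∈ uoplus Ec S.1) : z ∈ Coplus Ec C := by
  intro R hR
  have hscc := class_scc hcls hR hS
  exact prop_aux hf hcls hz ⟨S, hS, rfl⟩ hcone R.1 hscc.1 hscc.2


/-! ### Bounded reachability -/

def reachN (A : Set (V × V)) : ℕ → V → V → Prop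
  | 0 => fun a b => a = b
  | (n+1) => fun a b => reachN A n a b ∨ ∃ c, reachN A n a c ∧ (c, b) ∈ A

theorem reach_iff_reachN {A : Set (V × V)} {a b : V} :
    reach A a b ↔ ∃ n, reachN A n a b := by
  constructor
  · intro h
    induction h with
    | refl => exact ⟨0, rfl⟩
    | tail _ he ih =>
      obtain ⟨n, hn⟩ := ih
      exact ⟨n + 1, Or.inr ⟨_, hn, he⟩⟩
  · rintro ⟨n, hn⟩
    induction n generalizing b with
    | zero => exact (show a = b from hn) ▸ reach_refl
    | succ n ihn =>
      rcases hn with h | ⟨c, hc, he⟩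
      · exact ihn h
      · exact reach_tail (ihn hc) he

theorem decomp {A : Set (V × V)} :
    ∀ m a b, reachN A m a b →
      reach (A ∩ Ec) a b ∨
        ∃ S ∈ A, S ∉ Ec ∧ ∃ k < m, reachN A k a S.1 ∧ reach (A ∩ Ec) S.2 b := by
  intro m
  induction m with
  | zero =>
    intro a b h
    rw [show a = b from h]
    exact Or.inl reach_refl
  | succ m ihm =>
    intro a b h
    rcases h with h | ⟨c, hc, hedge⟩
    · rcases ihm a b h with hl | ⟨S, hSA, hSc, k, hk, pre, tl⟩
      · exact Or.inl hl
      · exact Or.inr ⟨S, hSA, hSc, k, hk.trans (Nat.lt_succ_self m), pre, tl⟩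
    · by_cases hcons : (c, b) ∈ Ec
      · rcases ihm a c hc with hl | ⟨S, hSA, hSc, k, hk, pre, tl⟩
        · exact Or.inl (reach_tail hl ⟨hedge, hcons⟩)
        · exact Or.inr ⟨S, hSA, hSc, k, hk.trans (Nat.lt_succ_self m), pre,
            reach_tail tl ⟨hedge, hcons⟩⟩
      · exact Or.inr ⟨(c, b), hedge, hcons, m, Nat.lt_succ_self m, hc, reach_refl⟩

/-! ### The master lemma: for a sink class, C⁺ ⊆ C^⊕ -/

theorem inner_master (hEc : Ec ⊆ E) (hf : FClosed E Ec) (hsp : Splittable E Ec)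
    {C : Set (V × V)} (hC : IsSink E (E \ Ec) Ec C) :
    ∀ m : ℕ, ∀ z, z ∈ Cplus E C → ∀ Y, Y ∈ C → ∀ S, S ∈ E \ Ec →
      reachN (E \ {Y}) m Y.1 S.1 → reach Ec S.2 z → z ∈ Coplus Ec C := by
  intro m
  induction m using Nat.strong_induction_on with
  | _ m ih =>
    intro z hz Y hY S hSEi hpre htail
    have hCcls := hC.1
    by_cases hSC : S ∈ C
    · have hzuS : z ∈ uplus E S := hz S hSC
      have hcone : z ∈ uoplus Ec S.1 := hf S hSEi z htail hzuS
      exact prop_lemma hf hCcls hz hSC hcone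
    · by_cases hzM : z ∈ uplus E S
      · -- f-closed gives consistent cone from S.1; regress along the prefix
        have hcone : z ∈ uoplus Ec S.1 := hf S hSEi z htail hzM
        rcases decomp m _ _ hpre with hl | ⟨S₂, hS₂A, hS₂c, k, hk, pre₂, tl₂⟩
        · have hYz : reach Ec Y.1 z :=
            reach_trans (reach_mono Set.inter_subset_right hl) hcone
          exact prop_lemma hf hCcls hz hY hYz
        · have hS₂Ei : S₂ ∈ E \ Ec := ⟨hS₂A.1, hS₂c⟩
          have htail₂ : reach Ec S₂.2 z :=
            reach_trans (reach_mono Set.inter_subset_right tl₂) hcone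
          exact ih k hk z hz Y hY S₂ hS₂Ei pre₂ htail₂
      · by_cases hS1 : S.1 ∈ Coplus Ec C
        · -- the source of S lies in C^⊕: sink forces S ∈ C, contradiction
          have hcls' : IsClass E (E \ Ec) {T ∈ E \ Ec | sameSCC E S.1 T.1} := ⟨S, hSEi, rfl⟩
          have hle : leOplus Ec C {T ∈ E \ Ec | sameSCC E S.1 T.1} :=
            ⟨S, ⟨hSEi, sameSCC_refl⟩, hS1⟩
          have hns := hC.2 _ hcls'
          rw [ltOplus] at hns
          push_neg at hns
          have heq := hns hle
          refine absurd ?_ hSC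
          rw [heq]
          exact ⟨hSEi, sameSCC_refl⟩
        · by_cases hS1p : S.1 ∈ Cplus E C
          · -- S.1 ∈ C⁺ \ C^⊕ : recurse at S.1 with the prefix
            rcases decomp m _ _ hpre with hl | ⟨S₃, hS₃A, hS₃c, k, hk, pre₃, tl₃⟩
            · have : reach Ec Y.1 S.1 := reach_mono Set.inter_subset_right hl
              exact absurd (prop_lemma hf hCcls hS1p hY this) hS1
            · have hS₃Ei : S₃ ∈ E \ Ec := ⟨hS₃A.1, hS₃c⟩
              have htl : reach Ec S₃.2 S.1 := reach_mono Set.inter_subset_right tl₃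
              exact absurd (ih k hk S.1 hS1p Y hY S₃ hS₃Ei pre₃ htl) hS1
          · -- splittability contradiction
            have hnall : ¬ ∀ R ∈ C, S.1 ∈ uplus E R := hS1p
            push_neg at hnall
            obtain ⟨Y₅, hY₅, hSnM⟩ := hnall
            have hreach : reach E Y₅.1 S.1 := by
              have h1 : reach E Y₅.1 Y.1 := (class_scc hCcls hY₅ hY).1
              have h2 : reach E Y.1 S.1 :=
                reach_mono Set.diff_subset ((reach_iff_reachN).2 ⟨m, hpre⟩)
              exact reach_trans h1 h2
            have hcp1 : coupledPlusEdge E (E \ Ec) Y₅ S :=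
              ⟨hSEi, Or.inr (exit uplus_refl hreach hSnM)⟩
            have hwalk1 : ureach E (uplus E S) S.2 z :=
              cons_clean (uplus_Ec_closed hEc hSEi.2) hEc htail hzM
            have hzY₅ : reach (E \ {Y₅}) Y₅.1 z := hz Y₅ hY₅
            have hwalk2 : ureach E (uplus E S) z Y₅.1 := by
              rcases revb Set.diff_subset hzY₅ hzM with h | h
              · exact h
              · exact absurd h hSnM
            have hcp2 : coupledPlusEdge E (E \ Ec) S Y₅ :=
              ⟨class_subset_Ei hCcls hY₅, Or.inr (ureach_trans hwalk1 hwalk2)⟩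
            have hscc := hsp S hSEi Y₅ (class_subset_Ei hCcls hY₅) hcp2 hcp1
            exact absurd (mem_class_of_scc hCcls hY₅ hSEi (sameSCC_symm hscc)) hSC

theorem master (hEc : Ec ⊆ E) (hf : FClosed E Ec) (hsp : Splittable E Ec)
    {C : Set (V × V)} (hC : IsSink E (E \ Ec) Ec C) :
    Cplus E C ⊆ Coplus Ec C := by
  intro z hz
  by_contra hzA
  have hnall : ¬ ∀ R ∈ C, z ∈ uoplus Ec R.1 := hzA
  push_neg at hnall
  obtain ⟨Y₂, hY₂, hzc⟩ := hnall
  have hzM : reach (E \ {Y₂}) Y₂.1 z := hz Y₂ hY₂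
  obtain ⟨m, hm⟩ := (reach_iff_reachN).1 hzM
  rcases decomp m _ _ hm with hl | ⟨S₀, hS₀A, hS₀c, k, _, pre, tl⟩
  · exact hzc (reach_mono Set.inter_subset_right hl)
  · exact hzA (inner_master hEc hf hsp hC k z hz Y₂ hY₂ S₀ ⟨hS₀A.1, hS₀c⟩ pre
      (reach_mono Set.inter_subset_right tl))


/-! ### Uniformization -/

theorem reach_edge {R : V × V} (hR : R ∈ E) : reach E R.1 R.2 :=
  reach_single (by rwa [Prod.mk.eta])

theorem clean_start (hEc : Ec ⊆ E) (hf : FClosed E Ec) (hsp : Splittable E Ec)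
    {C : Set (V × V)} (hC : IsSink E (E \ Ec) Ec C) {R : V × V} (hR : R ∈ C) {a : V}
    (ha : a ∉ Coplus Ec C) (hra : reach E R.1 a) :
    ∃ Y ∈ C, ureach E (uplus E Y) Y.2 a := by
  have hnall : ¬ ∀ X ∈ C, a ∈ uplus E X := fun h => ha (master hEc hf hsp hC h)
  push_neg at hnall
  obtain ⟨Y, hY, hnM⟩ := hnall
  have hreach : reach E Y.1 a := reach_trans (class_scc hC.1 hY hR).1 hra
  exact ⟨Y, hY, exit uplus_refl hreach hnM⟩

theorem unif (hEc : Ec ⊆ E) (hf : FClosed E Ec) (hsp : Splittable E Ec)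
    {C : Set (V × V)} (hC : IsSink E (E \ Ec) Ec C) {a b : V}
    (hw : ureach E (Coplus Ec C) a b)
    (hbase : ∃ Y ∈ C, ureach E (uplus E Y) Y.2 a) :
    ∃ Y ∈ C, ureach E (uplus E Y) Y.2 b := by
  obtain ⟨ha, hwalk⟩ := hw
  induction hwalk with
  | refl => exact hbase
  | tail hsteps hstep ih =>
    rename_i c x
    obtain ⟨Y, hY, hclean⟩ := ih
    obtain ⟨hedge, hxA⟩ := hstep
    by_cases hxM : x ∈ uplus E Y
    · have hxnp : ¬ ∀ X ∈ C, x ∈ uplus E X :=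
        fun h => hxA (master hEc hf hsp hC h)
      push_neg at hxnp
      obtain ⟨Y', hY', hxnM⟩ := hxnp
      have hreach : reach E Y'.1 x :=
        reach_trans (class_scc hC.1 hY' hY).1 (reach_of_uplus hxM)
      exact ⟨Y', hY', exit uplus_refl hreach hxnM⟩
    · exact ⟨Y, hY, ureach_tail hclean hedge hxM⟩

/-! ### Main lemma: no mutual ⊕-coupling between distinct incomparable sinks -/

theorem mainlem_aux (hEc : Ec ⊆ E) (hf : FClosed E Ec) (hsp : Splittable E Ec)
    {C D : Set (V × V)} (hCs : IsSink E (E \ Ec) Ec C) (hDs : IsSink E (E \ Ec) Ec D)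
    (hne : C ≠ D) (hCD : ¬ leOplus Ec C D)
    {Y₀ X₀ : V × V} (hY₀ : Y₀ ∈ C) (hX₀ : X₀ ∈ D)
    (extD : ∀ Y ∈ C, Y.1 ∉ uplus E X₀ → ureach E (uplus E X₀) X₀.2 Y.1)
    (hA : X₀.1 ∈ uplus E Y₀) (hB : Y₀.1 ∉ uplus E X₀) : False := by
  by_cases h2a : ∃ Yx ∈ C, Yx.1 ∈ uplus E X₀
  · obtain ⟨Yx, hYx, hYxM⟩ := h2a
    rcases reach_avoid (e := X₀) (class_scc hCs.1 hYx hY₀).1 with h | h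
    · exact hB (reach_trans hYxM h)
    · have hXYx : reach E X₀.1 Yx.1 := reach_of_uplus hYxM
      exact hne (class_eq_of_scc hCs.1 hDs.1 hYx hX₀ ⟨h, hXYx⟩)
  · push_neg at h2a
    by_cases hXC : X₀.1 ∈ Cplus E C
    · exact hCD ⟨X₀, hX₀, master hEc hf hsp hCs hXC⟩
    · have hnall : ¬ ∀ R ∈ C, X₀.1 ∈ uplus E R := hXC
      push_neg at hnall
      obtain ⟨Ys, hYs, hnM⟩ := hnall
      have hreach : reach E Ys.1 X₀.1 :=
        reach_trans (class_scc hCs.1 hYs hY₀).1 (reach_of_uplus hA)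
      have hcp1 : coupledPlusEdge E (E \ Ec) Ys X₀ :=
        ⟨class_subset_Ei hDs.1 hX₀, Or.inr (exit uplus_refl hreach hnM)⟩
      have hcp2 : coupledPlusEdge E (E \ Ec) X₀ Ys :=
        ⟨class_subset_Ei hCs.1 hYs, Or.inr (extD Ys hYs (h2a Ys hYs))⟩
      have hscc := hsp Ys (class_subset_Ei hCs.1 hYs) X₀ (class_subset_Ei hDs.1 hX₀) hcp1 hcp2
      exact hne (class_eq_of_scc hCs.1 hDs.1 hYs hX₀ hscc)

theorem mainlem (hEc : Ec ⊆ E) (hf : FClosed E Ec) (hsp : Splittable E Ec)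
    {C D : Set (V × V)} (hCs : IsSink E (E \ Ec) Ec C) (hDs : IsSink E (E \ Ec) Ec D)
    (hne : C ≠ D) (hCD : ¬ leOplus Ec C D) (hDC : ¬ leOplus Ec D C)
    (h1 : ∃ R ∈ C, ∃ T ∈ D, ureach E (Coplus Ec C) R.2 T.1)
    (h2 : ∃ R ∈ D, ∃ S ∈ C, ureach E (Coplus Ec D) R.2 S.1) : False := by
  obtain ⟨R, hR, T, hT, hwT⟩ := h1
  obtain ⟨R', hR', S, hS, hwS⟩ := h2
  have hRE : reach E R.1 R.2 := reach_edge ((class_subset_Ei hCs.1 hR).1)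
  have hR'E : reach E R'.1 R'.2 := reach_edge ((class_subset_Ei hDs.1 hR').1)
  obtain ⟨Y₀, hY₀, hclC⟩ :=
    unif hEc hf hsp hCs hwT (clean_start hEc hf hsp hCs hR (ureach_notmem_left hwT) hRE)
  obtain ⟨X₀, hX₀, hclD⟩ :=
    unif hEc hf hsp hDs hwS (clean_start hEc hf hsp hDs hR' (ureach_notmem_left hwS) hR'E)
  have extC : ∀ X ∈ D, X.1 ∉ uplus E Y₀ → ureach E (uplus E Y₀) Y₀.2 X.1 :=
    fun X hX hnM => uextend' hclC (class_scc hDs.1 hT hX).1 hnM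
  have extD : ∀ Y ∈ C, Y.1 ∉ uplus E X₀ → ureach E (uplus E X₀) X₀.2 Y.1 :=
    fun Y hY hnM => uextend' hclD (class_scc hCs.1 hS hY).1 hnM
  by_cases hA : X₀.1 ∈ uplus E Y₀
  · by_cases hB : Y₀.1 ∈ uplus E X₀
    · exact hne (class_eq_of_scc hCs.1 hDs.1 hY₀ hX₀
        ⟨reach_of_uplus hA, reach_of_uplus hB⟩)
    · exact mainlem_aux hEc hf hsp hCs hDs hne hCD hY₀ hX₀ extD hA hB
  · by_cases hB : Y₀.1 ∈ uplus E X₀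
    · exact mainlem_aux hEc hf hsp hDs hCs (Ne.symm hne) hDC hX₀ hY₀ extC hB hA
    · have hcp1 : coupledPlusEdge E (E \ Ec) Y₀ X₀ :=
        ⟨class_subset_Ei hDs.1 hX₀, Or.inr (extC X₀ hX₀ hA)⟩
      have hcp2 : coupledPlusEdge E (E \ Ec) X₀ Y₀ :=
        ⟨class_subset_Ei hCs.1 hY₀, Or.inr (extD Y₀ hY₀ hB)⟩
      have hscc := hsp Y₀ (class_subset_Ei hCs.1 hY₀) X₀ (class_subset_Ei hDs.1 hX₀) hcp1 hcp2
      exact hne (class_eq_of_scc hCs.1 hDs.1 hY₀ hX₀ hscc)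


/-! ### Transfer of couplings from C₂ to Csep -/

theorem edge_mem {R : V × V} (hR : R ∈ E) : (R.1, R.2) ∈ E := by rwa [Prod.mk.eta]

theorem k1walk (hEc : Ec ⊆ E) (hf : FClosed E Ec) (hsp : Splittable E Ec)
    {Cs C₂ : Set (V × V)}
    (hCs : IsSink E (E \ Ec) Ec Cs) (hC₂ : IsSink E (E \ Ec) Ec C₂)
    (hne2 : C₂ ≠ Cs)
    (hnoc : (∃ R ∈ C₂, ∃ S ∈ Cs, ureach E (Coplus Ec C₂) R.2 S.1) → False)
    {e₀ : V × V} (he₀ : e₀ ∈ Cs) {T : V × V} (hT : T ∈ C₂)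
    (hW : ureach E (Coplus Ec Cs) e₀.2 T.1)
    {R : V × V} (hR : R ∈ C₂) {b : V} (hQ : ureach E (Coplus Ec C₂) R.2 b) :
    ∃ e ∈ Cs, ureach E (Coplus Ec Cs) e.2 b := by
  obtain ⟨Sc, hSc⟩ := class_nonempty hCs.1
  have hR1nA : R.1 ∉ Coplus Ec Cs := by
    intro h
    exact (hCs.2 C₂ hC₂.1) ⟨⟨R, hR, h⟩, Ne.symm hne2⟩
  have hreachTR : reach E T.1 R.1 := (class_scc hC₂.1 hT hR).1
  have base1 : ∃ e ∈ Cs, ureach E (Coplus Ec Cs) e.2 R.1 :=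
    dirext hCs ⟨e₀, he₀, hW⟩ hreachTR hR1nA
  have hR2B : R.2 ∉ Coplus Ec C₂ := ureach_notmem_left hQ
  have hR2nA : R.2 ∉ Coplus Ec Cs := by
    intro h
    have hcons : reach Ec Sc.1 R.2 := h Sc hSc
    have hrev : ureach E (Coplus Ec C₂) R.2 Sc.1 :=
      rev_cons coplus_Ec_closed hEc hcons hR2B
    exact hnoc ⟨R, hR, Sc, hSc, hrev⟩
  have hRedge : (R.1, R.2) ∈ E := edge_mem (class_subset_Ei hC₂.1 hR).1
  have base2 : ∃ e ∈ Cs, ureach E (Coplus Ec Cs) e.2 R.2 := by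
    obtain ⟨e₁, he₁, w⟩ := base1
    exact ⟨e₁, he₁, ureach_tail w (Or.inl hRedge) hR2nA⟩
  obtain ⟨hQ1, hwalk⟩ := hQ
  induction hwalk with
  | refl => exact base2
  | tail hsteps hstep ih =>
    rename_i c x
    obtain ⟨hedge, hxB⟩ := hstep
    by_cases hxA : x ∈ Coplus Ec Cs
    · have hcons : reach Ec Sc.1 x := hxA Sc hSc
      have hrev : ureach E (Coplus Ec C₂) x Sc.1 :=
        rev_cons coplus_Ec_closed hEc hcons hxB
      have hpre : ureach E (Coplus Ec C₂) R.2 x :=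
        ⟨hR2B, Relation.ReflTransGen.tail hsteps ⟨hedge, hxB⟩⟩
      exact absurd (hnoc ⟨R, hR, Sc, hSc, ureach_trans hpre hrev⟩) not_false
    · obtain ⟨e, he, w⟩ := ih
      exact ⟨e, he, ureach_tail w hedge hxA⟩

end CQA

open CQA in
/-- in a splittable f-closed graph with at least one inconsistent
edge, a sink minimizing |coupled⊕(C)| among sinks is a separator. -/
theorem stmt_13 {V : Type*} [Fintype V] (E Ec : Set (V × V)) (hEc : Ec ⊆ E)
    (hsp : Splittable E Ec) (hf : FClosed E Ec) (hne : (E \ Ec).Nonempty)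
    (Csep : Set (V × V)) (hsink : IsSink E (E \ Ec) Ec Csep)
    (hmin : ∀ C, IsSink E (E \ Ec) Ec C →
      {C' | IsClass E (E \ Ec) C' ∧ coupledOplusCl E Ec Csep C'}.ncard ≤
        {C' | IsClass E (E \ Ec) C' ∧ coupledOplusCl E Ec C C'}.ncard) :
    ∀ C', IsClass E (E \ Ec) C' → C' ≠ Csep → coupledOplusCl E Ec Csep C' →
      ltOplus Ec C' Csep := by
  intro C' hC'cls hC'ne hC'cpl
  by_contra hnlt
  have hnle : ¬ leOplus Ec C' Csep := fun h => hnlt ⟨h, hC'ne⟩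
  have hw : ∃ R ∈ Csep, ∃ S ∈ C', ureach E (Coplus Ec Csep) R.2 S.1 := by
    rcases hC'cpl with h | h
    · exact absurd h hC'ne
    · exact h
  obtain ⟨R₀, hR₀, S₀, hS₀, hw₀⟩ := hw
  obtain ⟨C₂, hC₂sink, hC₂le⟩ := exists_sink hEc hC'cls
  have hC₂ne : C₂ ≠ Csep := by
    rintro rfl
    rcases hC₂le with h | h
    · exact hC'ne h.symm
    · exact hnle h
  have hnle1 : ¬ leOplus Ec Csep C₂ := by
    intro h
    exact (hsink.2 C₂ hC₂sink.1) ⟨h, Ne.symm hC₂ne⟩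
  have hnle2 : ¬ leOplus Ec C₂ Csep := by
    intro h
    rcases hC₂le with heq | hle
    · rw [heq] at h
      exact hnle h
    · exact hnle (leOplus_trans hle h)
  have hcw : ∃ T ∈ C₂, ureach E (Coplus Ec Csep) R₀.2 T.1 := by
    rcases hC₂le with heq | hle
    · refine ⟨S₀, ?_, hw₀⟩
      rw [heq]
      exact hS₀
    · obtain ⟨T, hT, hT1⟩ := hle
      have hTnA : T.1 ∉ Coplus Ec Csep := fun h => hnle1 ⟨T, hT, h⟩
      have hcons : reach Ec S₀.1 T.1 := hT1 S₀ hS₀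
      exact ⟨T, hT, ureach_trans hw₀ (cons_clean coplus_Ec_closed hEc hcons hTnA)⟩
  obtain ⟨T, hT, hwT⟩ := hcw
  have hnoc : (∃ R ∈ C₂, ∃ S ∈ Csep, ureach E (Coplus Ec C₂) R.2 S.1) → False := by
    intro h2
    exact mainlem hEc hf hsp hsink hC₂sink (Ne.symm hC₂ne) hnle1 hnle2
      ⟨R₀, hR₀, T, hT, hwT⟩ h2
  have hsub : {C'' | IsClass E (E \ Ec) C'' ∧ coupledOplusCl E Ec C₂ C''} ⊆
      {C'' | IsClass E (E \ Ec) C'' ∧ coupledOplusCl E Ec Csep C''} := by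
    rintro C'' ⟨hcls, hcpl⟩
    refine ⟨hcls, ?_⟩
    rcases hcpl with rfl | ⟨R, hR, S', hS', hwQ⟩
    · exact Or.inr ⟨R₀, hR₀, T, hT, hwT⟩
    · by_cases hCC : C'' = Csep
      · exact Or.inl hCC
      · obtain ⟨e, he, hwb⟩ :=
          k1walk hEc hf hsp hsink hC₂sink hC₂ne hnoc hR₀ hT hwT hR hwQ
        exact Or.inr ⟨e, he, S', hS', hwb⟩
  have hCmem1 : Csep ∈ {C'' | IsClass E (E \ Ec) C'' ∧ coupledOplusCl E Ec Csep C''} :=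
    ⟨hsink.1, Or.inl rfl⟩
  have hCnmem2 : Csep ∉ {C'' | IsClass E (E \ Ec) C'' ∧ coupledOplusCl E Ec C₂ C''} := by
    rintro ⟨_, hcpl⟩
    rcases hcpl with heq | h
    · exact hC₂ne heq.symm
    · exact hnoc h
  have hfin : {C'' | IsClass E (E \ Ec) C'' ∧ coupledOplusCl E Ec Csep C''}.Finite :=
    Set.Finite.subset classes_finite (fun x hx => hx.1)
  have hlt : {C'' | IsClass E (E \ Ec) C'' ∧ coupledOplusCl E Ec C₂ C''}.ncard <
      {C'' | IsClass E (E \ Ec) C'' ∧ coupledOplusCl E Ec Csep C''}.ncard :=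
    Set.ncard_lt_ncard ((Set.ssubset_iff_of_subset hsub).2 ⟨Csep, hCmem1, hCnmem2⟩) hfin
  have := hmin C₂ hC₂sink
  omega
end
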